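/- Let x, y ∈ {a,b} with x ≠ y and y the last letter of s_n. Then for any n ≥ 1: y · (s_n with last letter removed) = w_{n-1} v_{n-2}, and equivalently (w_n with last letter removed followed by y) = v_{n-2} w_{n-1}. Here w_n and v_n are the singular and adjoining singular words, with conventions w_{-2} = v_{-2} = ε, w_{-1} = a. -/

import Mathlib

/-!
Write `u⁻` for `u` with its last letter deleted. Since `sₙ` ends with `sₙ₋₂`, the last letter of
`sₙ` is `b` for odd `n` and `a` for even `n`; hence `wₙ₋₁ = y sₙ₋₁⁻`, `vₙ₋₂ = x sₙ₋₁^(dₙ-1) sₙ₋₂⁻`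
and `wₙ = x sₙ⁻`, where `sₙ₋₁⁻ x = sₙ₋₁`. The first identity then reduces to
`sₙ = sₙ₋₁ sₙ₋₁^(dₙ-1) sₙ₋₂`. For the second, `sₙ = sₙ₋₁^(dₙ-1) sₙ₋₁ sₙ₋₂`, and `sₙ₋₁ sₙ₋₂` and
`sₙ₋₂ sₙ₋₁` differ only by a swap of their last two letters: this passes from `(sₘ, sₘ₋₁)` to
`(sₘ^d sₘ₋₁, sₘ)` because `sₘ` commutes with its powers. So `sₙ⁻⁻ y = sₙ₋₁^(dₙ-1) sₙ₋₂ sₙ₋₁⁻`.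
-/

/-- Letters: `a` is `false`, `b` is `true`. -/
abbrev Word := List Bool

/-- `wpow w k` is the `k`-fold concatenation `w^k`. -/
def wpow (w : Word) (k : ℕ) : Word := (List.replicate k w).flatten

lemma wpow_succ (w : Word) (k : ℕ) : wpow w (k + 1) = wpow w k ++ w := by
  simp [wpow, List.replicate_succ']

lemma append_wpow_comm (w : Word) (k : ℕ) : w ++ wpow w k = wpow w k ++ w := by
  rw [← wpow_succ]
  simp [wpow, List.replicate_succ]

lemma ite_odd_eq_not_decide (n : ℤ) :
    (if Odd n then [false] else [true] : Word) = [!decide (Odd n)] := by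
  split_ifs with h <;> simp [h]

def SwapLastTwo (u v : Word) : Prop :=
  ∃ E p q, u ++ v = E ++ [p, q] ∧ v ++ u = E ++ [q, p]

lemma SwapLastTwo.wpow_append {u v : Word} (h : SwapLastTwo u v) (k : ℕ) :
    SwapLastTwo (wpow u k ++ v) u := by
  obtain ⟨E, p, q, huv, hvu⟩ := h
  refine ⟨wpow u k ++ E, q, p, ?_, ?_⟩
  · rw [List.append_assoc, hvu, List.append_assoc]
  · rw [← List.append_assoc, append_wpow_comm, List.append_assoc, huv, List.append_assoc]

structure IsStandardSeq (d : ℤ → ℕ) (s : ℤ → Word) : Prop where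
  neg_one : s (-1) = [true]
  zero : s 0 = [false]
  succ : ∀ n : ℤ, 1 ≤ n → s n = wpow (s (n - 1)) (d n) ++ s (n - 2)

namespace IsStandardSeq

variable {d : ℤ → ℕ} {s : ℤ → Word} (h : IsStandardSeq d s)
include h

lemma getLast? {n : ℤ} (hn : -1 ≤ n) : (s n).getLast? = some (decide (Odd n)) := by
  suffices key : ∀ m : ℤ, 0 ≤ m → (s (m - 1)).getLast? = some (decide (Odd (m - 1))) ∧
      (s m).getLast? = some (decide (Odd m)) by
    simpa using (key (n + 1) (by omega)).1
  intro m hm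
  induction m, hm using Int.leInduction with
  | base => simp [h.neg_one, h.zero]
  | succ m hm ih =>
    have hne : s (m - 1) ≠ [] := by simp [← List.getLast?_eq_none_iff, ih.1]
    refine ⟨by simpa using ih.2, ?_⟩
    rw [h.succ _ (by omega), add_sub_cancel_right, show m + 1 - 2 = m - 1 by ring,
      List.getLast?_append_of_ne_nil _ hne, ih.1]
    simp

lemma ne_nil {n : ℤ} (hn : -1 ≤ n) : s n ≠ [] := by
  simp [← List.getLast?_eq_none_iff, h.getLast? hn]

lemma dropLast_append_decide_odd {n : ℤ} (hn : -1 ≤ n) :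
    (s n).dropLast ++ [decide (Odd n)] = s n :=
  List.dropLast_append_getLast? _ (h.getLast? hn)

lemma swapLastTwo {n : ℤ} (hn : 0 ≤ n) : SwapLastTwo (s n) (s (n - 1)) := by
  induction n, hn using Int.leInduction with
  | base => exact ⟨[], false, true, by simp [h.zero, h.neg_one], by simp [h.zero, h.neg_one]⟩
  | succ m hm ih =>
    rw [h.succ _ (by omega), add_sub_cancel_right, show m + 1 - 2 = m - 1 by ring]
    exact ih.wpow_append _

lemma dropLast_eq {n : ℤ} (hn : 1 ≤ n) (hd : 1 ≤ d n) :
    (s n).dropLast = s (n - 1) ++ wpow (s (n - 1)) (d n - 1) ++ (s (n - 2)).dropLast := by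
  obtain ⟨k, hk⟩ := Nat.exists_eq_add_of_le' hd
  rw [h.succ n hn, hk, Nat.add_sub_cancel, wpow_succ, ← append_wpow_comm,
    List.dropLast_append_of_ne_nil (h.ne_nil (by omega))]

lemma dropLast_dropLast_append {n : ℤ} (hn : 1 ≤ n) (hd : 1 ≤ d n) :
    (s n).dropLast.dropLast ++ [decide (Odd n)] =
      wpow (s (n - 1)) (d n - 1) ++ s (n - 2) ++ (s (n - 1)).dropLast := by
  obtain ⟨E, p, q, h₁, h₂⟩ := h.swapLastTwo (n := n - 1) (by omega)
  rw [show n - 1 - 1 = n - 2 by ring] at h₁ h₂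
  have hq : q = decide (Odd n) := by
    have := congrArg List.getLast? h₁
    rw [List.getLast?_append_of_ne_nil _ (h.ne_nil (by omega)), h.getLast? (by omega)] at this
    simpa using this.symm
  have hsn : s n = wpow (s (n - 1)) (d n - 1) ++ E ++ [p] ++ [q] := by
    obtain ⟨k, hk⟩ := Nat.exists_eq_add_of_le' hd
    rw [h.succ n hn, hk, Nat.add_sub_cancel, wpow_succ, List.append_assoc, h₁]
    simp
  rw [hsn, List.dropLast_concat, List.dropLast_concat,
    ← List.dropLast_append_of_ne_nil (h.ne_nil (by omega)), List.append_assoc _ (s (n - 2)), h₂, hq]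
  simp

end IsStandardSeq

theorem singular_word_conjugate_identity_general (d : ℤ → ℕ) (s : ℤ → Word)
    (hd : ∀ n : ℤ, 1 ≤ n → 1 ≤ d n)
    (hs1 : s (-1) = [true]) (hs0 : s 0 = [false])
    (hs : ∀ n : ℤ, 1 ≤ n → s n = wpow (s (n - 1)) (d n) ++ s (n - 2))
    (w : ℤ → Word)
    (hw : ∀ n : ℤ, 0 ≤ n → w n = (if Odd n then [false] else [true]) ++ (s n).dropLast)
    (v : ℤ → Word)
    (hv : ∀ n : ℤ, -1 ≤ n → v n = (if Odd n then [false] else [true]) ++ (wpow (s (n + 1)) (d (n + 2) - 1) ++ s n).dropLast)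
    (n : ℤ) (hn : 1 ≤ n) (y : Bool) (hy : (s n).getLast? = some y) :
    [y] ++ (s n).dropLast = w (n - 1) ++ v (n - 2) ∧
    (w n).dropLast ++ [y] = v (n - 2) ++ w (n - 1) := by
  have h : IsStandardSeq d s := ⟨hs1, hs0, hs⟩
  obtain rfl : y = decide (Odd n) := by simpa [h.getLast? (by omega : -1 ≤ n)] using hy.symm
  have hw' {m : ℤ} (hm : 0 ≤ m) : w m = [!decide (Odd m)] ++ (s m).dropLast := by
    rw [hw m hm, ite_odd_eq_not_decide]
  have hv' : v (n - 2) =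
      [!decide (Odd n)] ++ (wpow (s (n - 1)) (d n - 1) ++ (s (n - 2)).dropLast) := by
    rw [hv _ (by omega), ite_odd_eq_not_decide, show n - 2 + 1 = n - 1 by ring,
      show n - 2 + 2 = n by ring, List.dropLast_append_of_ne_nil (h.ne_nil (by omega))]
    simp
  rw [hw' (by omega), hw' (by omega), hv']
  constructor
  · rw [h.dropLast_eq hn (hd n hn), ← h.dropLast_append_decide_odd (n := n - 1) (by omega)]
    simp [← Int.not_odd_iff_even]
  · have hne : (s n).dropLast ≠ [] := by
      simp [h.dropLast_eq hn (hd n hn), h.ne_nil (n := n - 1) (by omega)]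
    rw [List.singleton_append, List.dropLast_cons_of_ne_nil hne, List.cons_append,
      h.dropLast_dropLast_append hn (hd n hn),
      ← h.dropLast_append_decide_odd (n := n - 2) (by omega)]
    simp [← Int.not_odd_iff_even]

/-- For `n ≥ 1`, if `y` is the last letter of `sₙ`, then
`y · (sₙ with last letter removed) = wₙ₋₁ vₙ₋₂` and
`(wₙ with last letter removed) · y = vₙ₋₂ wₙ₋₁`. -/
theorem singular_word_conjugate_identity (d : ℤ → ℕ) (s : ℤ → Word)
    (hd : ∀ n : ℤ, 1 ≤ n → 1 ≤ d n)
    (hs1 : s (-1) = [true]) (hs0 : s 0 = [false])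
    (hs : ∀ n : ℤ, 1 ≤ n → s n = wpow (s (n - 1)) (d n) ++ s (n - 2))
    (w : ℤ → Word)
    (hw : ∀ n : ℤ, 0 ≤ n → w n = (if Odd n then [false] else [true]) ++ (s n).dropLast)
    (hwm1 : w (-1) = [false]) (hwm2 : w (-2) = [])
    (v : ℤ → Word)
    (hv : ∀ n : ℤ, -1 ≤ n → v n = (if Odd n then [false] else [true]) ++ (wpow (s (n + 1)) (d (n + 2) - 1) ++ s n).dropLast)
    (hvm2 : v (-2) = [])
    (n : ℤ) (hn : 1 ≤ n) (y : Bool) (hy : (s n).getLast? = some y) :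
    [y] ++ (s n).dropLast = w (n - 1) ++ v (n - 2) ∧
    (w n).dropLast ++ [y] = v (n - 2) ++ w (n - 1) :=
  singular_word_conjugate_identity_general d s hd hs1 hs0 hs w hw v hv n hn y hy
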